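/- Let k1, k2 ≥ 1 and let R : Matrix (Fin k1) (Fin k2) ℝ. Then the matrix R − H_{k1} * R * H_{k2} is the orthogonal projection of R onto the potential subspace {X : Matrix (Fin k1) (Fin k2) ℝ | B_{k1} * X * (B_{k2})ᵀ = 0} with respect to the Frobenius inner product; explicitly: (a) B_{k1} * (R − H_{k1} * R * H_{k2}) * (B_{k2})ᵀ = 0, and (b) for every X with B_{k1} * X * (B_{k2})ᵀ = 0, the Frobenius inner product trace((H_{k1} * R * H_{k2})ᵀ * X) = 0. -/

import Mathlib

open Matrix

/-- The matrix `B_k = [I_{k-1}, -1_{k-1}]` of size `(k-1) × k`. -/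
def Bmat (k : ℕ) : Matrix (Fin (k - 1)) (Fin k) ℝ :=
  Matrix.of fun i j => if (j : ℕ) = (i : ℕ) then 1 else if (j : ℕ) = k - 1 then -1 else 0

/-- The all-ones `k × k` matrix `𝟙_k 𝟙_kᵀ`. -/
def Jmat (k : ℕ) : Matrix (Fin k) (Fin k) ℝ :=
  Matrix.of fun _ _ => 1

/-- The centering matrix `H_k = I_k - (1/k) 𝟙_k 𝟙_kᵀ`. -/
noncomputable def Hmat (k : ℕ) : Matrix (Fin k) (Fin k) ℝ :=
  1 - (1 / (k : ℝ)) • Jmat k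

/-! `B_k Y = 0` says that all rows of `Y` agree with the last one, and the centering matrix kills
such a `Y`. Applied on both sides, `B X Bᵀ = 0` gives `H X H = 0`, so by cyclicity of the trace
`tr ((H R H)ᵀ X) = tr (Rᵀ H X H) = 0`. Part (a) follows from `B H = B` (the rows of `B` sum to zero)
and the symmetry of `H`. -/

section

variable {k : ℕ} {n : Type*}

theorem Bmat_mul_apply (Y : Matrix (Fin k) n ℝ) (i : Fin (k - 1)) (j : n) :
    (Bmat k * Y) i j = Y (i.castLE (Nat.sub_le k 1)) j -
      Y ⟨k - 1, Nat.sub_one_lt_of_lt (Nat.lt_of_sub_pos i.pos)⟩ j := by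
  have hi := i.isLt
  have hB : ∀ a, Bmat k i a * Y a j =
      (if a = i.castLE (Nat.sub_le k 1) then Y a j else 0) -
        (if a = ⟨k - 1, by omega⟩ then Y a j else 0) := by
    intro a
    simp only [Bmat, of_apply, Fin.ext_iff, Fin.val_castLE]
    split_ifs <;> first | (exfalso; omega) | ring
  simp only [mul_apply, hB, Finset.sum_sub_distrib, Finset.sum_ite_eq', Finset.mem_univ, if_true]

theorem Bmat_mul_Jmat : Bmat k * Jmat k = 0 := by
  ext i j
  simp [Bmat_mul_apply, Jmat]

theorem Bmat_mul_Hmat : Bmat k * Hmat k = Bmat k := by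
  rw [Hmat, Matrix.mul_sub, Matrix.mul_one, Matrix.mul_smul, Bmat_mul_Jmat, smul_zero, sub_zero]

theorem Hmat_transpose : (Hmat k)ᵀ = Hmat k := by
  have hJ : (Jmat k)ᵀ = Jmat k := rfl
  rw [Hmat, transpose_sub, transpose_smul, transpose_one, hJ]

theorem Hmat_mul_transpose_Bmat : Hmat k * (Bmat k)ᵀ = (Bmat k)ᵀ := by
  rw [← Hmat_transpose, ← transpose_mul, Bmat_mul_Hmat]

theorem row_eq_of_Bmat_mul_eq_zero {Y : Matrix (Fin k) n ℝ} (hY : Bmat k * Y = 0)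
    (a a' : Fin k) : Y a = Y a' := by
  have hk := a.pos
  suffices h : ∀ b : Fin k, Y b = Y ⟨k - 1, by omega⟩ by rw [h a, h a']
  intro b
  by_cases hb : (b : ℕ) = k - 1
  · rw [show b = ⟨k - 1, by omega⟩ from Fin.ext hb]
  ext j
  have := congrFun (congrFun hY ⟨b, by omega⟩) j
  rw [Bmat_mul_apply] at this
  exact sub_eq_zero.1 this

theorem Hmat_mul_eq_zero_of_Bmat_mul_eq_zero {Y : Matrix (Fin k) n ℝ}
    (hY : Bmat k * Y = 0) : Hmat k * Y = 0 := by
  ext a j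
  have hk : (k : ℝ) ≠ 0 := by have := a.pos; positivity
  have hJY : (Jmat k * Y) a j = k * Y a j := by
    simp [Jmat, mul_apply, fun c => congrFun (row_eq_of_Bmat_mul_eq_zero hY c a) j]
  rw [Hmat, Matrix.sub_mul, Matrix.one_mul, Matrix.smul_mul, Matrix.sub_apply,
    Matrix.smul_apply, hJY, smul_eq_mul, Matrix.zero_apply, one_div, inv_mul_cancel_left₀ hk, sub_self]

end

theorem Hmat_mul_mul_Hmat_eq_zero {k1 k2 : ℕ} {X : Matrix (Fin k1) (Fin k2) ℝ}
    (hX : Bmat k1 * X * (Bmat k2)ᵀ = 0) : Hmat k1 * X * Hmat k2 = 0 := by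
  have h1 : Hmat k1 * X * (Bmat k2)ᵀ = 0 := by
    rw [Matrix.mul_assoc] at hX ⊢
    exact Hmat_mul_eq_zero_of_Bmat_mul_eq_zero hX
  have h2 : Hmat k2 * (Hmat k1 * X)ᵀ = 0 := by
    refine Hmat_mul_eq_zero_of_Bmat_mul_eq_zero ?_
    rw [← transpose_transpose (Bmat k2), ← transpose_mul, h1, transpose_zero]
  rw [← Hmat_transpose (k := k2), ← transpose_transpose (Hmat k1 * X), ← transpose_mul, h2,
    transpose_zero]

theorem stmt8 (k1 k2 : ℕ)
    (R : Matrix (Fin k1) (Fin k2) ℝ) :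
    Bmat k1 * (R - Hmat k1 * R * Hmat k2) * (Bmat k2)ᵀ = 0 ∧
    ∀ X : Matrix (Fin k1) (Fin k2) ℝ, Bmat k1 * X * (Bmat k2)ᵀ = 0 →
      Matrix.trace ((Hmat k1 * R * Hmat k2)ᵀ * X) = 0 := by
  refine ⟨?_, fun X hX => ?_⟩
  · rw [Matrix.mul_sub, Matrix.sub_mul, ← Matrix.mul_assoc, ← Matrix.mul_assoc, Bmat_mul_Hmat,
      Matrix.mul_assoc _ (Hmat k2), Hmat_mul_transpose_Bmat, sub_self]
  · calc trace ((Hmat k1 * R * Hmat k2)ᵀ * X)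
        = trace (Hmat k2 * (Rᵀ * Hmat k1 * X)) := by
          simp only [transpose_mul, Hmat_transpose, Matrix.mul_assoc]
      _ = trace (Rᵀ * (Hmat k1 * X * Hmat k2)) := by
          rw [trace_mul_comm]; simp only [Matrix.mul_assoc]
      _ = 0 := by rw [Hmat_mul_mul_Hmat_eq_zero hX, Matrix.mul_zero, trace_zero]
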